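/- Let ν̄, κ̄ ∈ ℝ with ν̄² > 4κ̄, let r > 0, and set λ± := ((−ν̄ ± √(ν̄² − 4κ̄))/2)·r² (so λ₊ ≠ λ₋). Then for every t ∈ ℝ the matrix exponential of t·A, where A := [[0, −r], [κ̄r³, −ν̄r²]], is exp(tA) = [[ (λ₊e^{λ₋t} − λ₋e^{λ₊t})/(λ₊ − λ₋), −r(e^{λ₊t} − e^{λ₋t})/(λ₊ − λ₋) ], [ κ̄r³(e^{λ₊t} − e^{λ₋t})/(λ₊ − λ₋), (λ₊e^{λ₊t} − λ₋e^{λ₋t})/(λ₊ − λ₋) ]]. -/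

import Mathlib

/-!
A satisfies its characteristic equation `A * A = (λ₊ + λ₋) • A - (λ₊ * λ₋) • 1`. Since `λ₊ ≠ λ₋`,
`P = (λ₊ - λ₋)⁻¹ • (A - λ₋ • 1)` is idempotent and `t • A = (λ₊ t) • P + (λ₋ t) • (1 - P)` is a sum of
commuting multiples of complementary idempotents, whence `exp (t • A) = e^{λ₊ t} • P + e^{λ₋ t} • (1 - P)`
(Sylvester's formula). Expanding `P` gives the stated entries.
-/

open NormedSpace

section

variable {𝕂 𝔸 : Type*} [RCLike 𝕂] [NormedRing 𝔸] [NormedAlgebra 𝕂 𝔸] [CompleteSpace 𝔸]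

theorem IsIdempotentElem.exp_smul {P : 𝔸} (hP : IsIdempotentElem P) (c : 𝕂) :
    exp (c • P) = exp c • P + (1 - P) := by
  have hseries : HasSum
      (fun n : ℕ => ((n.factorial⁻¹ : 𝕂) * c ^ n) • P + if n = 0 then 1 - P else 0)
      (exp c • P + (1 - P)) := by
    simpa only [smul_eq_mul] using ((exp_series_hasSum_exp' (𝕂 := 𝕂) c).smul_const P).add
      (hasSum_ite_eq 0 (1 - P))
  refine (exp_series_hasSum_exp' (𝕂 := 𝕂) (c • P)).unique (hseries.congr_fun fun n => ?_)
  rcases n with _ | n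
  · simp
  · simp [smul_pow, hP.pow_succ_eq, mul_smul]

theorem IsIdempotentElem.exp_smul_add_smul_one_sub {P : 𝔸} (hP : IsIdempotentElem P)
    (a b : 𝕂) : exp (a • P + b • (1 - P)) = exp a • P + exp b • (1 - P) := by
  let +nondep : NormedAlgebra ℚ 𝔸 := .restrictScalars ℚ 𝕂 𝔸
  have hcomm : Commute (a • P) (b • (1 - P)) :=
    (((Commute.one_right P).sub_right (Commute.refl P)).smul_left a).smul_right b
  rw [exp_add_of_commute hcomm, hP.exp_smul, hP.one_sub.exp_smul, sub_sub_cancel]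
  simp only [add_mul, mul_add, smul_mul_assoc, mul_smul_comm, hP.mul_one_sub_self,
    hP.one_sub_mul_self, hP.eq, hP.one_sub.eq, smul_zero, add_zero, zero_add, add_comm]

theorem exp_smul_eq_of_mul_self_eq {A : 𝔸} {a b : 𝕂} (hA : A * A = (a + b) • A - (a * b) • 1)
    (hab : a ≠ b) (t : 𝕂) :
    exp (t • A) = ((a * exp (b * t) - b * exp (a * t)) / (a - b)) • (1 : 𝔸) +
      ((exp (a * t) - exp (b * t)) / (a - b)) • A := by
  have hab' : a - b ≠ 0 := sub_ne_zero.mpr hab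
  set P : 𝔸 := (a - b)⁻¹ • (A - b • 1) with hP_def
  have hP : IsIdempotentElem P := by
    rw [IsIdempotentElem, hP_def, smul_mul_smul_comm]
    simp only [sub_mul, mul_sub, hA, smul_mul_assoc, mul_smul_comm, one_mul, mul_one]
    match_scalars <;> field_simp <;> ring
  have hdecomp : t • A = (a * t) • P + (b * t) • (1 - P) := by
    rw [hP_def]
    match_scalars <;> field_simp <;> ring
  rw [hdecomp, hP.exp_smul_add_smul_one_sub, hP_def]
  match_scalars <;> field_simp <;> ring

end

theorem Matrix.mul_self_eq_trace_smul_sub_det_smul {R : Type*} [CommRing R]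
    (A : Matrix (Fin 2) (Fin 2) R) : A * A = A.trace • A - A.det • 1 := by
  ext i j
  fin_cases i <;> fin_cases j <;>
    simp [Matrix.mul_apply, Matrix.trace_fin_two, Matrix.det_fin_two] <;> ring

/-- For ν̄² > 4κ̄ and r > 0, with λ± = ((−ν̄ ± √(ν̄²−4κ̄))/2)·r² (so λ₊ ≠ λ₋), the matrix
exponential of t·A, A = [[0, −r], [κ̄r³, −ν̄r²]], is given by the explicit semigroup
formula of the linearized Navier–Stokes–Korteweg system. -/
theorem nsk_symbol_matrix_exponential (ν κ r : ℝ) (hνκ : 4 * κ < ν ^ 2) (hr : 0 < r) :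
    let A : Matrix (Fin 2) (Fin 2) ℝ := !![0, -r; κ * r ^ 3, -ν * r ^ 2]
    let lamp : ℝ := ((-ν + Real.sqrt (ν ^ 2 - 4 * κ)) / 2) * r ^ 2
    let lamm : ℝ := ((-ν - Real.sqrt (ν ^ 2 - 4 * κ)) / 2) * r ^ 2
    lamp ≠ lamm ∧
      ∀ t : ℝ,
        NormedSpace.exp (t • A) =
          !![(lamp * Real.exp (lamm * t) - lamm * Real.exp (lamp * t)) / (lamp - lamm),
              -r * (Real.exp (lamp * t) - Real.exp (lamm * t)) / (lamp - lamm);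
            κ * r ^ 3 * (Real.exp (lamp * t) - Real.exp (lamm * t)) / (lamp - lamm),
              (lamp * Real.exp (lamp * t) - lamm * Real.exp (lamm * t)) / (lamp - lamm)] := by
  intro A lamp lamm
  have hdisc : Real.sqrt (ν ^ 2 - 4 * κ) ^ 2 = ν ^ 2 - 4 * κ := Real.sq_sqrt (by linarith)
  have hgap : lamp - lamm = Real.sqrt (ν ^ 2 - 4 * κ) * r ^ 2 := by simp only [lamp, lamm]; ring
  have hne : lamp ≠ lamm := by
    rw [← sub_ne_zero, hgap]
    exact (mul_pos (Real.sqrt_pos.mpr (sub_pos.mpr hνκ)) (by positivity)).ne'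
  have htrace : A.trace = lamp + lamm := by
    simp only [A, lamp, lamm, Matrix.trace_fin_two_of]; ring
  have hdet : A.det = lamp * lamm := by
    simp only [A, lamp, lamm, Matrix.det_fin_two_of]; linear_combination (r ^ 4 / 4) * hdisc
  have hA : A * A = (lamp + lamm) • A - (lamp * lamm) • 1 := by
    rw [← htrace, ← hdet, A.mul_self_eq_trace_smul_sub_det_smul]
  refine ⟨hne, fun t => ?_⟩
  -- `exp` does not depend on the norm; any Banach algebra norm on matrices will do.
  refine (open scoped Matrix.Norms.Operator in exp_smul_eq_of_mul_self_eq hA hne t).trans ?_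
  simp only [← Real.exp_eq_exp_ℝ]
  ext i j
  fin_cases i <;> fin_cases j <;> simp [A] <;> ring
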